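/- arXiv:math/0409399 — 2 statements merged into one kernel-verified Lean document; each statement's English description precedes it below -/
import Mathlib

section
/- Let p be a prime number and let G be a nilpotent group generated by a (possibly infinite) set of elements, each of which has order a power of p. Then G is locally finite: every finitely generated subgroup of G is finite. -/
/-!
Reduce to finitely many generators: a finitely generated subgroup lies in the subgroup generated by
finitely many of the given generators, so it suffices that a nilpotent group generated by finitely
many torsion elements is finite. This goes by induction on the nilpotency class, the induction
hypothesis making `G / Z(G)` finite. Then `G` has only finitely many commutators (a commutator
depends only on the cosets of its entries modulo the centre), so `[G, G]` is finite by Schur's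
theorem, while `G / [G, G]` is a finitely generated abelian group generated by torsion elements,
hence finite.
-/

open Subgroup
open scoped commutatorElement

namespace Subgroup

variable {G : Type*} [Group G]

theorem exists_finite_subset_of_mem_closure {s : Set G} {g : G} (hg : g ∈ closure s) :
    ∃ t ⊆ s, t.Finite ∧ g ∈ closure t := by
  induction hg using closure_induction with
  | mem x hx => exact ⟨{x}, Set.singleton_subset_iff.mpr hx, Set.finite_singleton x,
      subset_closure rfl⟩
  | one => exact ⟨∅, Set.empty_subset s, Set.finite_empty, one_mem _⟩
  | mul x y _ _ hx hy =>
    obtain ⟨t₁, ht₁s, ht₁, hxt₁⟩ := hx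
    obtain ⟨t₂, ht₂s, ht₂, hyt₂⟩ := hy
    exact ⟨t₁ ∪ t₂, Set.union_subset ht₁s ht₂s, ht₁.union ht₂,
      mul_mem (closure_mono Set.subset_union_left hxt₁)
        (closure_mono Set.subset_union_right hyt₂)⟩
  | inv x _ hx =>
    obtain ⟨t, hts, ht, hxt⟩ := hx
    exact ⟨t, hts, ht, inv_mem hxt⟩

theorem FG.exists_finite_subset_le_closure {H : Subgroup G} (hH : H.FG) {s : Set G}
    (hle : H ≤ closure s) : ∃ t ⊆ s, t.Finite ∧ H ≤ closure t := by
  obtain ⟨T, rfl⟩ := hH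
  choose! u hus hu hxu using fun x (hx : x ∈ (T : Set G)) ↦
    exists_finite_subset_of_mem_closure (hle (subset_closure hx))
  exact ⟨⋃ x ∈ T, u x, Set.iUnion₂_subset hus, T.finite_toSet.biUnion hu,
    closure_le _ |>.mpr fun x hx ↦ closure_mono (Set.subset_biUnion_of_mem hx) (hxu x hx)⟩

theorem closure_image_eq_top {H : Type*} [Group H] {f : G →* H} (hf : Function.Surjective f)
    {s : Set G} (hs : closure s = ⊤) : closure (f '' s) = ⊤ := by
  rw [← MonoidHom.map_closure, hs, map_top_of_surjective f hf]

end Subgroup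

theorem CommGroup.isMulTorsion_of_closure_eq_top {A : Type*} [CommGroup A] {s : Set A}
    (hs : Subgroup.closure s = ⊤) (hord : ∀ g ∈ s, IsOfFinOrder g) : IsMulTorsion A := by
  have : ⊤ ≤ CommGroup.torsion A := hs ▸ (closure_le _).mpr hord
  exact fun g ↦ this (mem_top g)

theorem commutatorElement_mul_central_left {G : Type*} [Group G] (g h : G) {z : G}
    (hz : z ∈ center G) : ⁅g * z, h⁆ = ⁅g, h⁆ := by
  rw [mem_center_iff] at hz
  simp only [commutatorElement_def, mul_inv_rev, mul_assoc]
  rw [← mul_assoc z h, ← hz h, mul_assoc, mul_inv_cancel_left]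

theorem commutatorElement_mul_central_right {G : Type*} [Group G] (g h : G) {z : G}
    (hz : z ∈ center G) : ⁅g, h * z⁆ = ⁅g, h⁆ := by
  rw [← commutatorElement_inv, commutatorElement_mul_central_left _ _ hz, commutatorElement_inv]

theorem finite_commutatorSet_of_finite_quotient_center (G : Type*) [Group G]
    [Finite (G ⧸ center G)] : Finite (commutatorSet G) := by
  let f : (G ⧸ center G) × (G ⧸ center G) → G := fun q ↦ ⁅q.1.out, q.2.out⁆
  suffices commutatorSet G ⊆ Set.range f from ((Set.finite_range f).subset this).to_subtype
  rintro - ⟨a, b, rfl⟩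
  obtain ⟨z, hz⟩ := QuotientGroup.mk_out_eq_mul (center G) a
  obtain ⟨w, hw⟩ := QuotientGroup.mk_out_eq_mul (center G) b
  refine ⟨(a, b), ?_⟩
  simp only [f, hz, hw, commutatorElement_mul_central_left _ _ z.2,
    commutatorElement_mul_central_right _ _ w.2]

theorem finite_of_finite_quotient_center {G : Type*} [Group G] [Finite (G ⧸ center G)]
    {s : Set G} (hs : s.Finite) (hgen : closure s = ⊤) (hord : ∀ g ∈ s, IsOfFinOrder g) :
    Finite G := by
  have := finite_commutatorSet_of_finite_quotient_center G
  have hab : closure (Abelianization.of '' s) = ⊤ :=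
    closure_image_eq_top QuotientGroup.mk_surjective hgen
  have : Group.FG (Abelianization G) := Group.fg_iff.mpr ⟨_, hab, hs.image _⟩
  have htors : IsMulTorsion (Abelianization G) :=
    CommGroup.isMulTorsion_of_closure_eq_top hab <| by
      rintro - ⟨g, hg, rfl⟩
      exact Abelianization.of.isOfFinOrder (hord g hg)
  have : Finite (Abelianization G) := CommGroup.finite_of_fg_isMulTorsion _ htors
  have : Finite (G ⧸ commutator G) := this
  exact Finite.of_subgroup_quotient (commutator G)

theorem Group.IsNilpotent.finite_of_closure_eq_top {G : Type*} [Group G] [Group.IsNilpotent G]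
    {s : Set G} (hs : s.Finite) (hgen : closure s = ⊤) (hord : ∀ g ∈ s, IsOfFinOrder g) :
    Finite G := by
  suffices ∀ s : Set G, s.Finite → closure s = ⊤ → (∀ g ∈ s, IsOfFinOrder g) → Finite G from
    this s hs hgen hord
  refine nilpotent_center_quotient_ind
    (P := fun G _ _ ↦ ∀ s : Set G, s.Finite → closure s = ⊤ → (∀ g ∈ s, IsOfFinOrder g) → Finite G)
    G (fun _ _ _ _ _ _ _ ↦ Finite.of_subsingleton) ?_
  intro G _ _ ih s hs hgen hord
  have : Finite (G ⧸ center G) := by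
    refine ih _ (hs.image _) (closure_image_eq_top (QuotientGroup.mk'_surjective _) hgen) ?_
    rintro - ⟨g, hg, rfl⟩
    exact (QuotientGroup.mk' _).isOfFinOrder (hord g hg)
  exact finite_of_finite_quotient_center hs hgen hord

theorem Group.IsNilpotent.finite_closure {G : Type*} [Group G] [Group.IsNilpotent G]
    {t : Set G} (ht : t.Finite) (hord : ∀ g ∈ t, IsOfFinOrder g) : Finite (closure t) :=
  finite_of_closure_eq_top (ht.preimage Subtype.val_injective.injOn) closure_closure_coe_preimage
    fun _ hx ↦ Submonoid.isOfFinOrder_coe.mp (hord _ hx)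

/-- A nilpotent group generated by a (possibly infinite) set of elements of
`p`-power order is locally finite: every finitely generated subgroup is finite. -/
theorem stmt_2 (p : ℕ) (hp : p.Prime)
    (G : Type*) [Group G] [Group.IsNilpotent G]
    (s : Set G) (hgen : Subgroup.closure s = ⊤)
    (hord : ∀ g ∈ s, ∃ n : ℕ, g ^ p ^ n = 1) :
    ∀ H : Subgroup G, H.FG → Finite H := by
  intro H hH
  obtain ⟨t, hts, ht, hHt⟩ := hH.exists_finite_subset_le_closure (hgen ▸ le_top : H ≤ closure s)
  have : Finite (closure t) := Group.IsNilpotent.finite_closure ht fun g hg ↦ by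
    obtain ⟨n, hn⟩ := hord g (hts hg)
    exact isOfFinOrder_iff_pow_eq_one.mpr ⟨p ^ n, pow_pos hp.pos n, hn⟩
  exact Finite.of_injective _ (inclusion_injective hHt)
end

section
/- Let p be a prime number and let G be a nilpotent group generated by a set of elements, each of which has order a power of p. Then G is a p-group: every element of G has order a power of p. -/
/-!
Induction on the length of the lower central series `γ₀ = G, γᵢ₊₁ = ⁅γᵢ, G⁆`. If `γ_{c+1} = 1`,
then `γ_c` is central and, by induction, `G ⧸ γ_c` is a `p`-group. For `x ∈ γ_{c-1}` and `y ∈ G`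
the commutator `⁅x, y⁆` is central, so `⁅x, y⁆ ^ n = ⁅x, y ^ n⁆`; choosing `n = p ^ k` with
`y ^ p ^ k ∈ γ_c` makes the right-hand side trivial. Hence `γ_c` is generated by central elements
of `p`-power order, so it is a `p`-group, and then so is `G`. In the abelian base case the given
generators are themselves central of `p`-power order.
-/

open scoped commutatorElement

theorem commutatorElement_pow_right_of_commute {G : Type*} [Group G] {x y : G}
    (h : Commute y ⁅x, y⁆) (n : ℕ) : ⁅x, y ^ n⁆ = ⁅x, y⁆ ^ n := by
  induction n with
  | zero => simp
  | succ n ih =>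
    calc ⁅x, y ^ (n + 1)⁆ = ⁅x, y ^ n⁆ * (y ^ n * ⁅x, y⁆ * (y ^ n)⁻¹) := by group
      _ = ⁅x, y⁆ ^ (n + 1) := by rw [(h.pow_left n).eq, mul_inv_cancel_right, ih, pow_succ]

theorem IsPGroup.of_quotient {G : Type*} [Group G] {p : ℕ} {N : Subgroup G} [N.Normal]
    (hN : IsPGroup p N) (hQ : IsPGroup p (G ⧸ N)) : IsPGroup p G := by
  have := (hQ.to_subgroup ⊤).comap_of_ker_isPGroup (QuotientGroup.mk' N)
    (by rwa [QuotientGroup.ker_mk'])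
  rw [Subgroup.comap_top] at this
  exact this.of_equiv Subgroup.topEquiv

namespace Subgroup

variable {G : Type*} [Group G] {p : ℕ}

variable (G p) in
def centerPrimaryComponent : Subgroup G where
  carrier := {g | g ∈ center G ∧ ∃ k : ℕ, g ^ p ^ k = 1}
  one_mem' := ⟨one_mem _, 0, one_pow _⟩
  mul_mem' := by
    rintro a b ⟨ha, m, hm⟩ ⟨hb, n, hn⟩
    refine ⟨mul_mem ha hb, m + n, ?_⟩
    rw [(show Commute a b from mem_center_iff.mp hb a).mul_pow, pow_add, pow_mul, hm, one_pow,
      one_mul, mul_comm, pow_mul, hn, one_pow]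
  inv_mem' := fun ⟨ha, k, hk⟩ => ⟨inv_mem ha, k, by rw [inv_pow, hk, inv_one]⟩

theorem isPGroup_centerPrimaryComponent : IsPGroup p (centerPrimaryComponent G p) :=
  fun g => g.2.2.imp fun _ hk => Subtype.ext hk

theorem commutator_top_le_centerPrimaryComponent {H : Subgroup G}
    (hH : ⁅H, (⊤ : Subgroup G)⁆ ≤ center G)
    (hpow : ∀ y : G, ∃ k : ℕ, y ^ p ^ k ∈ ⁅H, (⊤ : Subgroup G)⁆) :
    ⁅H, (⊤ : Subgroup G)⁆ ≤ centerPrimaryComponent G p := by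
  rw [commutator_le]
  intro x hx y _
  have hxy : ⁅x, y⁆ ∈ center G := hH (commutator_mem_commutator hx (mem_top y))
  obtain ⟨k, hk⟩ := hpow y
  refine ⟨hxy, k, ?_⟩
  rw [← commutatorElement_pow_right_of_commute (mem_center_iff.mp hxy y),
    commutatorElement_eq_one_iff_commute]
  exact mem_center_iff.mp (hH hk) x

theorem le_center_of_lowerCentralSeries_succ_eq_bot {n : ℕ}
    (h : (⊤ : Subgroup G).lowerCentralSeries (n + 1) = ⊥) :
    (⊤ : Subgroup G).lowerCentralSeries n ≤ center G := by
  rwa [lowerCentralSeries_succ, commutator_eq_bot_iff_le_centralizer, coe_top,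
    centralizer_univ] at h

theorem lowerCentralSeries_quotient_lowerCentralSeries (n : ℕ) :
    (⊤ : Subgroup (G ⧸ (⊤ : Subgroup G).lowerCentralSeries n)).lowerCentralSeries n = ⊥ := by
  rw [← map_top_of_surjective _ (QuotientGroup.mk'_surjective _), ← map_lowerCentralSeries,
    map_eq_bot_iff, QuotientGroup.ker_mk']

end Subgroup

open Subgroup

theorem closure_image_eq_top_of_surjective {G H : Type*} [Group G] [Group H] {f : G →* H}
    (hf : Function.Surjective f) {s : Set G} (hs : closure s = ⊤) : closure (f '' s) = ⊤ := by
  rw [← MonoidHom.map_closure, hs, map_top_of_surjective f hf]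

theorem isPGroup_of_lowerCentralSeries_succ_eq_bot {p c : ℕ} {G : Type*} [Group G] {s : Set G}
    (hgen : closure s = ⊤) (hord : ∀ g ∈ s, ∃ n : ℕ, g ^ p ^ n = 1)
    (hc : (⊤ : Subgroup G).lowerCentralSeries (c + 1) = ⊥) : IsPGroup p G := by
  induction c generalizing G with
  | zero =>
    have hs : s ⊆ centerPrimaryComponent G p := fun g hg =>
      ⟨le_center_of_lowerCentralSeries_succ_eq_bot hc (mem_top g), hord g hg⟩
    rw [← closure_le, hgen] at hs
    exact (isPGroup_centerPrimaryComponent.to_le hs).of_equiv topEquiv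
  | succ c ih =>
    set K := (⊤ : Subgroup G).lowerCentralSeries (c + 1)
    have hQ : IsPGroup p (G ⧸ K) := by
      refine ih (closure_image_eq_top_of_surjective (QuotientGroup.mk'_surjective K) hgen) ?_
        (lowerCentralSeries_quotient_lowerCentralSeries _)
      rintro _ ⟨g, hg, rfl⟩
      exact (hord g hg).imp fun n hn => by rw [← map_pow, hn, map_one]
    have hK : K ≤ centerPrimaryComponent G p :=
      commutator_top_le_centerPrimaryComponent (le_center_of_lowerCentralSeries_succ_eq_bot hc)
        fun y => (hQ y).imp fun _ hk => (QuotientGroup.eq_one_iff _).mp hk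
    exact (isPGroup_centerPrimaryComponent.to_le hK).of_quotient hQ

theorem stmt_3_general (p : ℕ)
    (G : Type*) [Group G] [Group.IsNilpotent G]
    (s : Set G) (hgen : Subgroup.closure s = ⊤)
    (hord : ∀ g ∈ s, ∃ n : ℕ, g ^ p ^ n = 1) :
    IsPGroup p G := by
  obtain ⟨c, hc⟩ := Subgroup.nilpotent_iff_lowerCentralSeries.mp ‹Group.IsNilpotent G›
  have hc' := Subgroup.lowerCentralSeries_antitone (⊤ : Subgroup G) c.le_succ
  rw [hc, le_bot_iff] at hc'
  exact isPGroup_of_lowerCentralSeries_succ_eq_bot hgen hord hc'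

/-- A nilpotent group generated by a set of elements of `p`-power order is a
`p`-group: every element has order a power of `p`. -/
theorem stmt_3 (p : ℕ) (hp : p.Prime)
    (G : Type*) [Group G] [Group.IsNilpotent G]
    (s : Set G) (hgen : Subgroup.closure s = ⊤)
    (hord : ∀ g ∈ s, ∃ n : ℕ, g ^ p ^ n = 1) :
    IsPGroup p G :=
  stmt_3_general p G s hgen hord
end
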